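/- For any θ ∈ (-∞,0) ∪ (0,1), the function f(y) = (θ/σ)φ((y-μ)/σ) / [(θΦ((y-μ)/σ) - 1)·log(1-θ)] is a probability density function on ℝ. -/

import Mathlib

open MeasureTheory Filter Topology

noncomputable def stdPdf (x : ℝ) : ℝ := (Real.sqrt (2 * Real.pi))⁻¹ * Real.exp (-(x ^ 2) / 2)

noncomputable def stdCdf (x : ℝ) : ℝ := ∫ t in Set.Iic x, stdPdf t

/-!
The weight `logDensity θ u = θ / ((θu - 1) log(1 - θ))` is a probability density on `[0, 1]`:
it is positive there because `θ` and `log (1 - θ)` have opposite signs while `θu - 1 < 0`,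
and its primitive `logCdf θ u = log (1 - θu) / log (1 - θ)` runs from `0` to `1`.
The normal-logarithmic density in `z = (y - μ)/σ` is `σ⁻¹ φ(z) · logDensity θ (Φ z)`, the
derivative of `logCdf θ (Φ z)`, so after the change of variables its integral is
`logCdf θ 1 - logCdf θ 0 = 1`; of `Φ` this only needs `Φ' = φ ≥ 0`, `Φ(-∞) = 0`
and `Φ(∞) = 1`.
-/

open Set

noncomputable def logDensity (θ u : ℝ) : ℝ := θ / ((θ * u - 1) * Real.log (1 - θ))

noncomputable def logCdf (θ u : ℝ) : ℝ := Real.log (1 - θ * u) / Real.log (1 - θ)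

section LogDistribution

variable {θ : ℝ}

lemma log_one_sub_ne_zero (hθ : θ < 1) (hθ0 : θ ≠ 0) : Real.log (1 - θ) ≠ 0 :=
  Real.log_ne_zero_of_pos_of_ne_one (by linarith) (by contrapose! hθ0; linarith)

lemma one_sub_mul_pos (hθ : θ < 1) {u : ℝ} (hu : u ∈ Icc (0 : ℝ) 1) : 0 < 1 - θ * u := by
  rcases le_total θ 0 with h | h <;> nlinarith [hu.1, hu.2]

lemma logDensity_pos (hθ : θ < 1) (hθ0 : θ ≠ 0) {u : ℝ} (hu : u ∈ Icc (0 : ℝ) 1) :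
    0 < logDensity θ u := by
  have hD := one_sub_mul_pos hθ hu
  rw [logDensity, div_pos_iff]
  rcases hθ0.lt_or_gt with h | h
  · exact .inr ⟨h, mul_neg_of_neg_of_pos (by linarith) (Real.log_pos (by linarith))⟩
  · exact .inl ⟨h, mul_pos_of_neg_of_neg (by linarith) (Real.log_neg (by linarith) (by linarith))⟩

lemma continuousOn_logDensity (hθ : θ < 1) (hθ0 : θ ≠ 0) :
    ContinuousOn (logDensity θ) (Icc 0 1) := by
  refine continuousOn_const.div (by fun_prop) fun u hu =>
    mul_ne_zero ?_ (log_one_sub_ne_zero hθ hθ0)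
  linarith [one_sub_mul_pos hθ hu]

lemma hasDerivAt_logCdf {u : ℝ} (hu : θ * u ≠ 1) : HasDerivAt (logCdf θ) (logDensity θ u) u := by
  have := ((((hasDerivAt_id u).const_mul θ).const_sub 1).log
    (sub_ne_zero.2 hu.symm)).div_const (Real.log (1 - θ))
  refine this.congr_deriv ?_
  simp only [logDensity, id]
  field_simp
  ring

lemma logCdf_zero : logCdf θ 0 = 0 := by simp [logCdf]

lemma logCdf_one (hθ : θ < 1) (hθ0 : θ ≠ 0) : logCdf θ 1 = 1 := by
  simp [logCdf, log_one_sub_ne_zero hθ hθ0]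

end LogDistribution

lemma Monotone.mem_Icc_of_tendsto {F : ℝ → ℝ} {a b : ℝ} (hF : Monotone F)
    (hbot : Tendsto F atBot (𝓝 a)) (htop : Tendsto F atTop (𝓝 b)) (x : ℝ) : F x ∈ Icc a b :=
  ⟨hF.le_of_tendsto hbot x, hF.ge_of_tendsto htop x⟩

section Composition

variable {θ : ℝ} {p F : ℝ → ℝ}

lemma integrable_mul_logDensity_comp (hθ : θ < 1) (hθ0 : θ ≠ 0) (hp : Integrable p)
    (hF : Continuous F) (hF01 : ∀ x, F x ∈ Icc 0 1) :
    Integrable fun x => p x * logDensity θ (F x) := by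
  obtain ⟨C, hC⟩ := isCompact_Icc.exists_bound_of_continuousOn (continuousOn_logDensity hθ hθ0)
  exact hp.mul_bdd
    ((continuousOn_logDensity hθ hθ0).comp_continuous hF hF01).aestronglyMeasurable
    (ae_of_all _ fun x => hC _ (hF01 x))

theorem integral_mul_logDensity_comp (hθ : θ < 1) (hθ0 : θ ≠ 0)
    (hF : ∀ x, HasDerivAt F (p x) x) (hp : Integrable p) (hp0 : ∀ x, 0 ≤ p x)
    (hbot : Tendsto F atBot (𝓝 0)) (htop : Tendsto F atTop (𝓝 1)) :
    ∫ x, p x * logDensity θ (F x) = 1 := by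
  have hF01 := (monotone_of_hasDerivAt_nonneg hF hp0).mem_Icc_of_tendsto hbot htop
  have hcont : Continuous F := continuous_iff_continuousAt.2 fun x => (hF x).continuousAt
  have hθu (u : ℝ) (hu : u ∈ Icc (0 : ℝ) 1) : θ * u ≠ 1 := by linarith [one_sub_mul_pos hθ hu]
  have hderiv (x : ℝ) : HasDerivAt (logCdf θ ∘ F) (p x * logDensity θ (F x)) x := by
    simpa only [mul_comm] using (hasDerivAt_logCdf (hθu _ (hF01 x))).comp x (hF x)
  have hlim (u : ℝ) (hu : u ∈ Icc (0 : ℝ) 1) (l : Filter ℝ) (h : Tendsto F l (𝓝 u)) :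
      Tendsto (logCdf θ ∘ F) l (𝓝 (logCdf θ u)) :=
    (hasDerivAt_logCdf (hθu u hu)).continuousAt.tendsto.comp h
  have := integral_of_hasDerivAt_of_tendsto hderiv
    (integrable_mul_logDensity_comp hθ hθ0 hp hcont hF01)
    (hlim 0 (by simp) _ hbot) (hlim 1 (by simp) _ htop)
  rwa [logCdf_one hθ hθ0, logCdf_zero, sub_zero] at this

end Composition

section IntegralIic

variable {E : Type*} [NormedAddCommGroup E] [NormedSpace ℝ E] {f : ℝ → E}

lemma hasDerivAt_integral_Iic [CompleteSpace E] (hf : Integrable f) {x : ℝ}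
    (hx : ContinuousAt f x) :
    HasDerivAt (fun y => ∫ t in Iic y, f t) (f x) x := by
  have hsplit (y : ℝ) : ∫ t in Iic y, f t = (∫ t in Iic 0, f t) + ∫ t in (0 : ℝ)..y, f t := by
    rw [← intervalIntegral.integral_Iic_sub_Iic hf.integrableOn hf.integrableOn, add_sub_cancel]
  rw [funext hsplit]
  exact (intervalIntegral.integral_hasDerivAt_right hf.intervalIntegrable
    hf.aestronglyMeasurable.stronglyMeasurableAtFilter hx).const_add _

lemma tendsto_integral_Iic_atTop (hf : Integrable f) :
    Tendsto (fun y => ∫ t in Iic y, f t) atTop (𝓝 (∫ t, f t)) :=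
  (aecover_Iic tendsto_id).integral_tendsto_of_countably_generated hf

end IntegralIic

lemma stdPdf_eq_gaussianPDFReal : stdPdf = ProbabilityTheory.gaussianPDFReal 0 1 := by
  ext x
  simp [stdPdf, ProbabilityTheory.gaussianPDFReal]

lemma stdPdf_nonneg (x : ℝ) : 0 ≤ stdPdf x := by
  unfold stdPdf
  positivity

lemma continuous_stdPdf : Continuous stdPdf := by
  unfold stdPdf
  fun_prop

lemma integrable_stdPdf : Integrable stdPdf :=
  stdPdf_eq_gaussianPDFReal ▸ ProbabilityTheory.integrable_gaussianPDFReal 0 1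

lemma integral_stdPdf : ∫ x, stdPdf x = 1 :=
  stdPdf_eq_gaussianPDFReal ▸ ProbabilityTheory.integral_gaussianPDFReal_eq_one 0 one_ne_zero

lemma hasDerivAt_stdCdf (x : ℝ) : HasDerivAt stdCdf (stdPdf x) x :=
  hasDerivAt_integral_Iic integrable_stdPdf continuous_stdPdf.continuousAt

lemma tendsto_stdCdf_atBot : Tendsto stdCdf atBot (𝓝 0) :=
  tendsto_integral_Iic_zero tendsto_id

lemma tendsto_stdCdf_atTop : Tendsto stdCdf atTop (𝓝 1) :=
  integral_stdPdf ▸ tendsto_integral_Iic_atTop integrable_stdPdf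

lemma stdCdf_mem_Icc (x : ℝ) : stdCdf x ∈ Icc 0 1 :=
  (monotone_of_hasDerivAt_nonneg hasDerivAt_stdCdf stdPdf_nonneg).mem_Icc_of_tendsto
    tendsto_stdCdf_atBot tendsto_stdCdf_atTop x

/-- for θ ∈ (-∞,0) ∪ (0,1) the normal-logarithmic density
`f(y) = (θ/σ)φ(z)/[(θΦ(z)-1)log(1-θ)]` is a probability density on ℝ. -/
theorem nl_is_density (μ σ θ : ℝ) (hσ : 0 < σ) (hθ : θ < 1) (hθ0 : θ ≠ 0) :
    (∀ y : ℝ, 0 ≤ θ / σ * stdPdf ((y - μ) / σ)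
        / ((θ * stdCdf ((y - μ) / σ) - 1) * Real.log (1 - θ))) ∧
    ∫ y : ℝ, θ / σ * stdPdf ((y - μ) / σ)
        / ((θ * stdCdf ((y - μ) / σ) - 1) * Real.log (1 - θ)) = 1 := by
  set g : ℝ → ℝ := fun z => stdPdf z * logDensity θ (stdCdf z) with hg
  have hform (y : ℝ) : θ / σ * stdPdf ((y - μ) / σ)
      / ((θ * stdCdf ((y - μ) / σ) - 1) * Real.log (1 - θ)) = σ⁻¹ * g ((y - μ) / σ) := by
    simp only [hg, logDensity]
    ring
  simp only [hform]
  refine ⟨fun y => mul_nonneg (inv_nonneg.2 hσ.le)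
    (mul_nonneg (stdPdf_nonneg _) (logDensity_pos hθ hθ0 (stdCdf_mem_Icc _)).le), ?_⟩
  rw [integral_const_mul, integral_sub_right_eq_self (fun y => g (y / σ)) μ,
    Measure.integral_comp_div, abs_of_pos hσ, smul_eq_mul, inv_mul_cancel_left₀ hσ.ne', hg,
    integral_mul_logDensity_comp hθ hθ0 hasDerivAt_stdCdf integrable_stdPdf stdPdf_nonneg
      tendsto_stdCdf_atBot tendsto_stdCdf_atTop]
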